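/- arXiv:1705.05088 — 2 statements merged into one kernel-verified Lean document; each statement's English description precedes it below -/
import Mathlib

section
/- The Pareto frontier of a mitigation-analysis task always exists, is unique, is non-empty, and is finite. Precisely: the set of mitigation strategies that are not dominated by any other mitigation strategy is non-empty (it contains the empty strategy) and is a finite set. -/
/-- A fix-action over network propositions `P`: precondition and postcondition
are finite sets of literals (a literal is a pair of a proposition and a
polarity, `true` for a positive and `false` for a negative occurrence),
containing at most one literal per proposition, together with a strictly
positive real cost. -/
structure FixAction (P : Type*) where
  pre : Finset (P × Bool)
  post : Finset (P × Bool)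
  cost : ℝ
  cost_pos : 0 < cost
  pre_unique : ∀ (p : P) (b b' : Bool), (p, b) ∈ pre → (p, b') ∈ pre → b = b'
  post_unique : ∀ (p : P) (b b' : Bool), (p, b) ∈ post → (p, b') ∈ post → b = b'

variable {P : Type*} [DecidableEq P]

/-- A network state `s` satisfies a literal `(p, true)` iff `p ∈ s`,
and satisfies `(p, false)` iff `p ∉ s`. -/
def satLit (s : Finset P) (l : P × Bool) : Prop :=
  (l.1 ∈ s) ↔ l.2 = true

/-- A fix-action is applicable to a state if the state satisfies every
literal of its precondition. -/
def FixAction.applicable (f : FixAction P) (s : Finset P) : Prop :=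
  ∀ l ∈ f.pre, satLit s l

/-- The result `s[f]` of applying a fix-action: every proposition occurring
positively in `post f`, together with every proposition of `s` whose
negation does not occur in `post f`. -/
def FixAction.applyTo (f : FixAction P) (s : Finset P) : Finset P :=
  (f.post.filter (fun l => l.2 = true)).image Prod.fst ∪
    s.filter (fun p => (p, false) ∉ f.post)

/-- Applicability of a finite sequence of fix-actions to a state. -/
def seqApplicable (s : Finset P) : List (FixAction P) → Prop
  | [] => True
  | f :: σ => f.applicable s ∧ seqApplicable (f.applyTo s) σ

/-- The result `s[σ]` of applying a sequence of fix-actions. -/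
def seqApply (s : Finset P) : List (FixAction P) → Finset P
  | [] => s
  | f :: σ => seqApply (f.applyTo s) σ

/-- The cost of a sequence of fix-actions: the sum of the costs of its
elements. -/
noncomputable def seqCost (σ : List (FixAction P)) : ℝ :=
  (σ.map FixAction.cost).sum

/-- A mitigation strategy: a finite sequence of fix-actions from `F`,
applicable to the initial network state `s₀`, whose cost is within the
mitigation budget `b ∈ ℝ₊ ∪ {∞}`. -/
def IsStrategy (F : Finset (FixAction P)) (s₀ : Finset P) (b : EReal)
    (σ : List (FixAction P)) : Prop :=
  (∀ f ∈ σ, f ∈ F) ∧ seqApplicable s₀ σ ∧ (seqCost σ : EReal) ≤ b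

/-- `σ₁` dominates `σ₂` (w.r.t. initial state `s₀` and maximal attack success
probability `pstar`). -/
def Dominates (s₀ : Finset P) (pstar : Finset P → ℝ)
    (σ₁ σ₂ : List (FixAction P)) : Prop :=
  (pstar (seqApply s₀ σ₁) < pstar (seqApply s₀ σ₂) ∧ seqCost σ₁ ≤ seqCost σ₂) ∨
    (pstar (seqApply s₀ σ₁) ≤ pstar (seqApply s₀ σ₂) ∧ seqCost σ₁ < seqCost σ₂)

/-- The Pareto frontier: the set of mitigation strategies not dominated by
any mitigation strategy. -/
def ParetoFrontier (F : Finset (FixAction P)) (s₀ : Finset P) (b : EReal)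
    (pstar : Finset P → ℝ) : Set (List (FixAction P)) :=
  {σ | IsStrategy F s₀ b σ ∧
    ∀ σ', IsStrategy F s₀ b σ' → ¬ Dominates s₀ pstar σ' σ}

/-!
A frontier strategy is no more expensive than any strategy reaching a state of no larger `p*`,
so frontier strategies ending in the same state cost the same; as there are finitely many
states, frontier costs are bounded. Every action of `F` costs at least some `c > 0`, so a cost
bound `M` bounds the length by `M / c`, and there are finitely many such lists over `F`.
The empty strategy is undominated because every nonempty strategy has positive cost.
-/

section Cost

omit [DecidableEq P]

lemma seqCost_nil : seqCost ([] : List (FixAction P)) = 0 := rfl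

lemma seqCost_cons (f : FixAction P) (σ : List (FixAction P)) :
    seqCost (f :: σ) = f.cost + seqCost σ := by
  simp [seqCost]

lemma seqCost_nonneg (σ : List (FixAction P)) : 0 ≤ seqCost σ := by
  induction σ with
  | nil => exact le_rfl
  | cons f σ ih => rw [seqCost_cons]; linarith [f.cost_pos]

lemma seqCost_pos_of_ne_nil {σ : List (FixAction P)} (hσ : σ ≠ []) : 0 < seqCost σ := by
  obtain ⟨f, σ, rfl⟩ := List.exists_cons_of_ne_nil hσ
  rw [seqCost_cons]
  linarith [f.cost_pos, seqCost_nonneg σ]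

lemma length_mul_le_seqCost {F : Finset (FixAction P)} {c : ℝ} (hc : ∀ f ∈ F, c ≤ f.cost)
    {σ : List (FixAction P)} (hσ : ∀ f ∈ σ, f ∈ F) :
    σ.length * c ≤ seqCost σ := by
  induction σ with
  | nil => simp [seqCost_nil]
  | cons f σ ih =>
    have hf := hc f (hσ f List.mem_cons_self)
    have hrest := ih fun g hg => hσ g (List.mem_cons_of_mem _ hg)
    rw [seqCost_cons, List.length_cons, Nat.cast_succ]
    linarith

lemma FixAction.exists_pos_le_cost (F : Finset (FixAction P)) :
    ∃ c > 0, ∀ f ∈ F, c ≤ f.cost := by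
  rcases F.eq_empty_or_nonempty with rfl | hF
  · exact ⟨1, one_pos, by simp⟩
  · obtain ⟨f₀, -, hf₀⟩ := F.exists_min_image FixAction.cost hF
    exact ⟨f₀.cost, f₀.cost_pos, hf₀⟩

lemma finite_setOf_seqCost_le (F : Finset (FixAction P)) (M : ℝ) :
    {σ : List (FixAction P) | (∀ f ∈ σ, f ∈ F) ∧ seqCost σ ≤ M}.Finite := by
  obtain ⟨c, hc, hcF⟩ := FixAction.exists_pos_le_cost F
  refine ((List.finite_length_le F ⌈M / c⌉₊).image (List.map Subtype.val)).subset ?_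
  rintro σ ⟨hσF, hσM⟩
  have hlen : (σ.length : ℝ) ≤ M / c := by
    rw [le_div_iff₀ hc]
    exact (length_mul_le_seqCost hcF hσF).trans hσM
  refine ⟨σ.pmap Subtype.mk hσF, ?_, by simp [List.map_pmap]⟩
  simpa using Nat.cast_le.mp (hlen.trans (Nat.le_ceil _))

end Cost

section ParetoFrontier

variable {F : Finset (FixAction P)} {s₀ : Finset P} {b : EReal} {pstar : Finset P → ℝ}

lemma nil_isStrategy (hb : 0 ≤ b) : IsStrategy F s₀ b [] :=
  ⟨by simp, trivial, by simpa [seqCost_nil] using hb⟩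

lemma nil_mem_paretoFrontier (hb : 0 ≤ b) : [] ∈ ParetoFrontier F s₀ b pstar := by
  refine ⟨nil_isStrategy hb, fun σ _ hdom => ?_⟩
  rcases hdom with ⟨hlt, hcost⟩ | ⟨-, hcost⟩
  · obtain rfl : σ = [] := by
      by_contra hσ
      exact (seqCost_pos_of_ne_nil hσ).not_ge hcost
    exact lt_irrefl _ hlt
  · exact (seqCost_nonneg σ).not_gt hcost

lemma seqCost_le_of_mem_paretoFrontier {σ σ' : List (FixAction P)}
    (hσ : σ ∈ ParetoFrontier F s₀ b pstar) (hσ' : IsStrategy F s₀ b σ')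
    (hp : pstar (seqApply s₀ σ') ≤ pstar (seqApply s₀ σ)) :
    seqCost σ ≤ seqCost σ' :=
  not_lt.mp fun hlt => hσ.2 σ' hσ' (Or.inr ⟨hp, hlt⟩)

lemma bddAbove_seqCost_paretoFrontier [Finite P] :
    BddAbove (seqCost '' ParetoFrontier F s₀ b pstar) := by
  have hstate : ∀ t : Finset P, ∃ C, ∀ σ ∈ ParetoFrontier F s₀ b pstar,
      seqApply s₀ σ = t → seqCost σ ≤ C := by
    intro t
    by_cases ht : ∃ σ₀ ∈ ParetoFrontier F s₀ b pstar, seqApply s₀ σ₀ = t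
    · obtain ⟨σ₀, hσ₀, rfl⟩ := ht
      exact ⟨seqCost σ₀, fun σ hσ hσt =>
        seqCost_le_of_mem_paretoFrontier hσ hσ₀.1 (hσt ▸ le_rfl)⟩
    · push Not at ht
      exact ⟨0, fun σ hσ hσt => absurd hσt (ht σ hσ)⟩
  choose C hC using hstate
  obtain ⟨M, hM⟩ := Finite.exists_le C
  exact ⟨M, by rintro _ ⟨σ, hσ, rfl⟩; exact (hC _ σ hσ rfl).trans (hM _)⟩

end ParetoFrontier

theorem pareto_frontier_nonempty_and_finite_general
    {P : Type*} [DecidableEq P] [Fintype P]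
    (F : Finset (FixAction P)) (s₀ : Finset P)
    (b : EReal) (hb : 0 ≤ b)
    (pstar : Finset P → ℝ) :
    ([] : List (FixAction P)) ∈ ParetoFrontier F s₀ b pstar ∧
    (ParetoFrontier F s₀ b pstar).Nonempty ∧
    (ParetoFrontier F s₀ b pstar).Finite := by
  have hnil := nil_mem_paretoFrontier (F := F) (s₀ := s₀) (pstar := pstar) hb
  refine ⟨hnil, ⟨[], hnil⟩, ?_⟩
  obtain ⟨M, hM⟩ := bddAbove_seqCost_paretoFrontier (F := F) (s₀ := s₀) (b := b) (pstar := pstar)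
  exact (finite_setOf_seqCost_le F M).subset fun σ hσ => ⟨hσ.1.1, hM ⟨σ, hσ, rfl⟩⟩

/-- The Pareto frontier of a mitigation-analysis task always exists, is
unique (it is a well-defined set), is non-empty (it contains the empty
strategy), and is finite. -/
theorem pareto_frontier_nonempty_and_finite
    {P : Type*} [DecidableEq P] [Fintype P]
    (F : Finset (FixAction P)) (s₀ : Finset P)
    (b : EReal) (hb : 0 ≤ b)
    (pstar : Finset P → ℝ) (hpstar : ∀ s, 0 ≤ pstar s) :
    ([] : List (FixAction P)) ∈ ParetoFrontier F s₀ b pstar ∧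
    (ParetoFrontier F s₀ b pstar).Nonempty ∧
    (ParetoFrontier F s₀ b pstar).Finite :=
  pareto_frontier_nonempty_and_finite_general F s₀ b hb pstar
end

section
/- Let f₁ and f₂ be commutative fix-actions and let s be a network state such that the two-element sequence f₁, f₂ is applicable to s. Then the sequence f₂, f₁ is also applicable to s, and the resulting states coincide: s[f₁, f₂] = s[f₂, f₁]. -/
variable {P : Type*} [DecidableEq P]

/-- `f₁` disables `f₂` if some literal in `post f₁` is the negation of a
literal in `pre f₂`. -/
def disablesFix (f₁ f₂ : FixAction P) : Prop :=
  ∃ (p : P) (b : Bool), (p, b) ∈ f₁.post ∧ (p, !b) ∈ f₂.pre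

/-- `f₁` and `f₂` conflict if some literal in `post f₁` is the negation of a
literal in `post f₂`. -/
def conflictFix (f₁ f₂ : FixAction P) : Prop :=
  ∃ (p : P) (b : Bool), (p, b) ∈ f₁.post ∧ (p, !b) ∈ f₂.post

/-- `f₁` and `f₂` interfere if they conflict or either disables the other. -/
def interfereFix (f₁ f₂ : FixAction P) : Prop :=
  conflictFix f₁ f₂ ∨ disablesFix f₁ f₂ ∨ disablesFix f₂ f₁

/-- `f₁` enables `f₂` if some literal of `post f₁` belongs to `pre f₂` or
some literal of `post f₂` belongs to `pre f₁`. -/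
def enablesFix (f₁ f₂ : FixAction P) : Prop :=
  (∃ l ∈ f₁.post, l ∈ f₂.pre) ∨ (∃ l ∈ f₂.post, l ∈ f₁.pre)

/-- `f₁` and `f₂` are commutative if they do not interfere and neither
enables the other. -/
def commutativeFix (f₁ f₂ : FixAction P) : Prop :=
  ¬ interfereFix f₁ f₂ ∧ ¬ enablesFix f₁ f₂

/-! Commutativity forbids the postcondition of either action to mention a proposition of the
other's precondition (with the same polarity that would be enabling, with the opposite one
disabling), so each action leaves the other's applicability unchanged. Since the two
postconditions never assign opposite polarities, both orders set the same propositions. -/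

namespace FixAction

variable (f : FixAction P) (s : Finset P)

theorem mem_applyTo (p : P) :
    p ∈ f.applyTo s ↔ (p, true) ∈ f.post ∨ (p ∈ s ∧ (p, false) ∉ f.post) := by
  simp [applyTo]

theorem satLit_applyTo_iff {p : P} (hp : ∀ c, (p, c) ∉ f.post) (b : Bool) :
    satLit (f.applyTo s) (p, b) ↔ satLit s (p, b) := by
  simp [satLit, mem_applyTo, hp]

variable {f s}

theorem applyTo_comm {g : FixAction P} (h : ¬ conflictFix f g) :
    f.applyTo (g.applyTo s) = g.applyTo (f.applyTo s) := by
  ext p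
  have h₁ : ¬ ((p, true) ∈ f.post ∧ (p, false) ∈ g.post) := fun ⟨hf, hg⟩ => h ⟨p, true, hf, hg⟩
  have h₂ : ¬ ((p, false) ∈ f.post ∧ (p, true) ∈ g.post) := fun ⟨hf, hg⟩ => h ⟨p, false, hf, hg⟩
  simp only [mem_applyTo]
  tauto

end FixAction

namespace commutativeFix

variable {α : Type*} {f₁ f₂ : FixAction α}

theorem symm (h : commutativeFix f₁ f₂) : commutativeFix f₂ f₁ := by
  obtain ⟨hi, he⟩ := h
  refine ⟨?_, fun he' => he he'.symm⟩
  rintro (⟨p, b, h₂, h₁⟩ | hd | hd)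
  · exact hi (Or.inl ⟨p, !b, h₁, by simpa using h₂⟩)
  · exact hi (Or.inr (Or.inr hd))
  · exact hi (Or.inr (Or.inl hd))

theorem not_mem_post_of_mem_pre (h : commutativeFix f₁ f₂) {p : α} {b : Bool}
    (hpre : (p, b) ∈ f₂.pre) (c : Bool) : (p, c) ∉ f₁.post := by
  intro hpost
  rcases Bool.eq_or_eq_not c b with rfl | rfl
  · exact h.2 (Or.inl ⟨(p, c), hpost, hpre⟩)
  · exact h.1 (Or.inr (Or.inl ⟨p, !b, hpost, by simpa using hpre⟩))

theorem applicable_applyTo_iff [DecidableEq α] (h : commutativeFix f₁ f₂) (s : Finset α) :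
    f₂.applicable (f₁.applyTo s) ↔ f₂.applicable s :=
  forall_congr' fun ⟨_, b⟩ => forall_congr' fun hpre =>
    f₁.satLit_applyTo_iff s (h.not_mem_post_of_mem_pre hpre) b

end commutativeFix

/-- If `f₁` and `f₂` are commutative fix-actions and the sequence `f₁, f₂` is
applicable to a network state `s`, then the sequence `f₂, f₁` is also
applicable to `s`, and the resulting states coincide. -/
theorem commutative_fix_actions_swap
    {P : Type*} [DecidableEq P]
    (f₁ f₂ : FixAction P) (hcomm : commutativeFix f₁ f₂)
    (s : Finset P) (happ : seqApplicable s [f₁, f₂]) :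
    seqApplicable s [f₂, f₁] ∧ seqApply s [f₁, f₂] = seqApply s [f₂, f₁] := by
  obtain ⟨h₁, h₂, -⟩ := happ
  have h₂' : f₂.applicable s := (hcomm.applicable_applyTo_iff s).1 h₂
  have h₁' : f₁.applicable (f₂.applyTo s) := (hcomm.symm.applicable_applyTo_iff s).2 h₁
  exact ⟨⟨h₂', h₁', trivial⟩, FixAction.applyTo_comm fun hc => hcomm.symm.1 (Or.inl hc)⟩
end
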